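/- For every integer l ≥ 1, every infinitely differentiable function g of two variables, and every x in a sufficiently small neighborhood of x₀, one has f_y^2 · (d/dx)[(Δ_l g)(x, y(x))] = f_y · Δ_{l+1} g + l · Δ_1(f_y) · Δ_l g − l · Δ_2 f · Δ_{l−1}(g_y), where on the right-hand side all expressions are evaluated at the point (x, y(x)). -/

import Mathlib

open Filter Topology

/-- `pd f p r` is the mixed partial derivative `∂^(p+r) f / ∂x^p ∂y^r` of a function
of two real variables. -/
noncomputable def pd (f : ℝ → ℝ → ℝ) (p r : ℕ) : ℝ → ℝ → ℝ :=
  fun x y => iteratedDeriv p (fun x' => iteratedDeriv r (fun y' => f x' y') y) x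

/-- `Delta f l g = Σ_{j=0}^{l} (−1)^j C(l,j) g_{x^{l−j} y^j} f_x^j f_y^{l−j}`. -/
noncomputable def Delta (f : ℝ → ℝ → ℝ) (l : ℕ) (g : ℝ → ℝ → ℝ) : ℝ → ℝ → ℝ :=
  fun x y => ∑ j ∈ Finset.range (l + 1),
    (-1 : ℝ) ^ j * (l.choose j : ℝ) * pd g (l - j) j x y *
      (pd f 1 0 x y) ^ j * (pd f 0 1 x y) ^ (l - j)

open ContDiff Function
lemma pd_zero_zero (F : ℝ → ℝ → ℝ) : pd F 0 0 = F := by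
  funext x y; simp [pd]

lemma pd_one_zero (F : ℝ → ℝ → ℝ) (x y : ℝ) :
    pd F 1 0 x y = deriv (fun x' => F x' y) x := by
  simp [pd, iteratedDeriv_one]

lemma pd_zero_one (F : ℝ → ℝ → ℝ) (x y : ℝ) :
    pd F 0 1 x y = deriv (fun y' => F x y') y := by
  simp [pd, iteratedDeriv_one]

lemma pd_succ_left (F : ℝ → ℝ → ℝ) (p r : ℕ) :
    pd F (p + 1) r = pd (pd F p r) 1 0 := by
  funext x y
  rw [pd_one_zero]
  show iteratedDeriv (p+1) (fun x' => iteratedDeriv r (fun y' => F x' y') y) x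
      = deriv (fun x' => pd F p r x' y) x
  rw [iteratedDeriv_succ]
  rfl

lemma pd_succ_right_inner (F : ℝ → ℝ → ℝ) (p r : ℕ) :
    pd F p (r + 1) = pd (pd F 0 1) p r := by
  funext x y
  show iteratedDeriv p (fun x' => iteratedDeriv (r+1) (fun y' => F x' y') y) x
      = iteratedDeriv p (fun x' => iteratedDeriv r (fun y' => pd F 0 1 x' y') y) x
  congr 1
  funext x'
  rw [iteratedDeriv_succ']
  congr 1
  funext y'
  rw [pd_zero_one]

lemma pd_zero_right (F : ℝ → ℝ → ℝ) (r : ℕ) (x y : ℝ) :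
    pd F 0 r x y = iteratedDeriv r (F x) y := by
  simp [pd]

lemma pd_zero_succ (F : ℝ → ℝ → ℝ) (r : ℕ) (x y : ℝ) :
    pd F 0 (r+1) x y = deriv (fun y' => pd F 0 r x y') y := by
  rw [pd_zero_right, iteratedDeriv_succ]
  rfl

section analytic
variable {F : ℝ → ℝ → ℝ} {U : Set (ℝ × ℝ)} (hU : IsOpen U)
  (hF : ContDiffOn ℝ (⊤:ℕ∞) (uncurry F) U)

lemma hasDerivAt_fst (hF : ContDiffOn ℝ (⊤:ℕ∞) (uncurry F) U) (hU : IsOpen U)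
    {a b : ℝ} (h : (a, b) ∈ U) :
    HasDerivAt (fun x' => F x' b) (fderiv ℝ (uncurry F) (a, b) (1, 0)) a := by
  have hd : HasFDerivAt (uncurry F) (fderiv ℝ (uncurry F) (a,b)) (a,b) :=
    (hF.contDiffAt (hU.mem_nhds h)).differentiableAt (by simp) |>.hasFDerivAt
  have hc : HasDerivAt (fun x' : ℝ => (x', b)) ((1:ℝ), (0:ℝ)) a :=
    (hasDerivAt_id a).prodMk (hasDerivAt_const a b)
  exact hd.comp_hasDerivAt a hc

lemma hasDerivAt_snd (hF : ContDiffOn ℝ (⊤:ℕ∞) (uncurry F) U) (hU : IsOpen U)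
    {a b : ℝ} (h : (a, b) ∈ U) :
    HasDerivAt (fun y' => F a y') (fderiv ℝ (uncurry F) (a, b) (0, 1)) b := by
  have hd : HasFDerivAt (uncurry F) (fderiv ℝ (uncurry F) (a,b)) (a,b) :=
    (hF.contDiffAt (hU.mem_nhds h)).differentiableAt (by simp) |>.hasFDerivAt
  have hc : HasDerivAt (fun y' : ℝ => (a, y')) ((0:ℝ), (1:ℝ)) b :=
    (hasDerivAt_const b a).prodMk (hasDerivAt_id b)
  exact hd.comp_hasDerivAt b hc

lemma pd_one_zero_eq (hF : ContDiffOn ℝ (⊤:ℕ∞) (uncurry F) U) (hU : IsOpen U)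
    {a b : ℝ} (h : (a, b) ∈ U) :
    pd F 1 0 a b = fderiv ℝ (uncurry F) (a, b) (1, 0) := by
  rw [pd_one_zero]; exact (hasDerivAt_fst hF hU h).deriv

lemma pd_zero_one_eq (hF : ContDiffOn ℝ (⊤:ℕ∞) (uncurry F) U) (hU : IsOpen U)
    {a b : ℝ} (h : (a, b) ∈ U) :
    pd F 0 1 a b = fderiv ℝ (uncurry F) (a, b) (0, 1) := by
  rw [pd_zero_one]; exact (hasDerivAt_snd hF hU h).deriv

lemma smooth_fderiv_apply (hF : ContDiffOn ℝ (⊤:ℕ∞) (uncurry F) U) (hU : IsOpen U)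
    (v : ℝ × ℝ) :
    ContDiffOn ℝ (⊤:ℕ∞) (fun z => fderiv ℝ (uncurry F) z v) U :=
  (hF.fderiv_of_isOpen hU (by simp)).clm_apply contDiffOn_const

lemma smooth_pd_one_zero (hF : ContDiffOn ℝ (⊤:ℕ∞) (uncurry F) U) (hU : IsOpen U) :
    ContDiffOn ℝ (⊤:ℕ∞) (uncurry (pd F 1 0)) U := by
  refine (smooth_fderiv_apply hF hU (1,0)).congr (fun z hz => ?_)
  have : z = (z.1, z.2) := rfl
  rw [this] at hz ⊢
  exact pd_one_zero_eq hF hU hz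

lemma smooth_pd_zero_one (hF : ContDiffOn ℝ (⊤:ℕ∞) (uncurry F) U) (hU : IsOpen U) :
    ContDiffOn ℝ (⊤:ℕ∞) (uncurry (pd F 0 1)) U := by
  refine (smooth_fderiv_apply hF hU (0,1)).congr (fun z hz => ?_)
  have : z = (z.1, z.2) := rfl
  rw [this] at hz ⊢
  exact pd_zero_one_eq hF hU hz

end analytic

section analytic2
variable {U : Set (ℝ × ℝ)}

lemma smooth_pd (hU : IsOpen U) :
    ∀ (r p : ℕ) (F : ℝ → ℝ → ℝ), ContDiffOn ℝ (⊤:ℕ∞) (uncurry F) U →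
      ContDiffOn ℝ (⊤:ℕ∞) (uncurry (pd F p r)) U
  | 0, 0, F, hF => hF.congr (fun z _ => by rw [pd_zero_zero])
  | 0, p+1, F, hF => by
      rw [pd_succ_left]
      exact smooth_pd_one_zero (smooth_pd hU 0 p F hF) hU
  | r+1, p, F, hF => by
      rw [pd_succ_right_inner]
      exact smooth_pd hU r p _ (smooth_pd_zero_one hF hU)

/-- Clairaut for first derivatives. -/
lemma pd_clairaut (hU : IsOpen U) {F : ℝ → ℝ → ℝ}
    (hF : ContDiffOn ℝ (⊤:ℕ∞) (uncurry F) U) {a b : ℝ} (h : (a, b) ∈ U) :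
    deriv (fun y' => pd F 1 0 a y') b = pd F 1 1 a b := by
  set Fu := uncurry F with hFu
  set D := fderiv ℝ Fu with hD
  have hDsm : ContDiffOn ℝ (⊤:ℕ∞) D U := hF.fderiv_of_isOpen hU (by simp)
  have hDdiff : HasFDerivAt D (fderiv ℝ D (a,b)) (a,b) :=
    ((hDsm.differentiableOn (by simp)).differentiableAt (hU.mem_nhds h)).hasFDerivAt
  set f'' := fderiv ℝ D (a,b) with hf''
  have hev : ∀ᶠ z in 𝓝 (a,b), HasFDerivAt Fu (D z) z := by
    filter_upwards [hU.mem_nhds h] with z hz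
    exact ((hF.contDiffAt (hU.mem_nhds hz)).differentiableAt (by simp)).hasFDerivAt
  have hsymm := second_derivative_symmetric_of_eventually hev hDdiff
  -- derivative of z ↦ D z v
  have happ : ∀ v : ℝ × ℝ, HasFDerivAt (fun z => D z v)
      ((ContinuousLinearMap.apply ℝ ℝ v).comp f'') (a,b) := fun v =>
    (ContinuousLinearMap.apply ℝ ℝ v).hasFDerivAt.comp (a,b) hDdiff
  have hyline : HasDerivAt (fun y' => D (a, y') (1,0)) (f'' (0,1) (1,0)) b := by
    have hc : HasDerivAt (fun y' : ℝ => (a, y')) ((0:ℝ), (1:ℝ)) b :=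
      (hasDerivAt_const b a).prodMk (hasDerivAt_id b)
    exact (happ (1,0)).comp_hasDerivAt b hc
  have hxline : HasDerivAt (fun x' => D (x', b) (0,1)) (f'' (1,0) (0,1)) a := by
    have hc : HasDerivAt (fun x' : ℝ => (x', b)) ((1:ℝ), (0:ℝ)) a :=
      (hasDerivAt_id a).prodMk (hasDerivAt_const a b)
    exact (happ (0,1)).comp_hasDerivAt a hc
  have h1 : deriv (fun y' => pd F 1 0 a y') b = f'' (0,1) (1,0) := by
    have hEq : (fun y' => pd F 1 0 a y') =ᶠ[𝓝 b] fun y' => D (a, y') (1,0) := by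
      have : ∀ᶠ y' in 𝓝 b, (a, y') ∈ U := by
        have hc : ContinuousAt (fun y' : ℝ => (a, y')) b :=
          (continuousAt_const).prodMk continuousAt_id
        exact hc.preimage_mem_nhds (hU.mem_nhds h)
      filter_upwards [this] with y' hy'
      exact pd_one_zero_eq hF hU hy'
    rw [hEq.deriv_eq, hyline.deriv]
  have h2 : pd F 1 1 a b = f'' (1,0) (0,1) := by
    rw [show pd F 1 1 = pd (pd F 0 1) 1 0 from pd_succ_right_inner F 1 0, pd_one_zero]
    have hEq : (fun x' => pd F 0 1 x' b) =ᶠ[𝓝 a] fun x' => D (x', b) (0,1) := by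
      have : ∀ᶠ x' in 𝓝 a, (x', b) ∈ U := by
        have hc : ContinuousAt (fun x' : ℝ => (x', b)) a :=
          continuousAt_id.prodMk continuousAt_const
        exact hc.preimage_mem_nhds (hU.mem_nhds h)
      filter_upwards [this] with x' hx'
      exact pd_zero_one_eq hF hU hx'
    rw [hEq.deriv_eq, hxline.deriv]
  rw [h1, h2, hsymm]

end analytic2

lemma pd_zero_swap (F : ℝ → ℝ → ℝ) (r : ℕ) :
    pd (pd F 0 r) 0 1 = pd F 0 (r+1) := by
  funext a b
  rw [pd_zero_one, ← pd_zero_succ]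

lemma pd_swap {U : Set (ℝ × ℝ)} (hU : IsOpen U) {F : ℝ → ℝ → ℝ}
    (hF : ContDiffOn ℝ (⊤:ℕ∞) (uncurry F) U) :
    ∀ (p r : ℕ) {a b : ℝ}, (a, b) ∈ U →
      pd (pd F p r) 0 1 a b = pd F p (r+1) a b := by
  intro p
  induction p with
  | zero => intro r a b _; rw [pd_zero_swap]
  | succ p ih =>
    intro r a b h
    have hH : ContDiffOn ℝ (⊤:ℕ∞) (uncurry (pd F p r)) U := smooth_pd hU r p F hF
    rw [pd_zero_one, pd_succ_left]
    rw [pd_clairaut hU hH h]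
    rw [show pd (pd F p r) 1 1 = pd (pd (pd F p r) 0 1) 1 0 from
      pd_succ_right_inner (pd F p r) 1 0, pd_one_zero]
    have hEq : (fun x' => pd (pd F p r) 0 1 x' b) =ᶠ[𝓝 a]
        (fun x' => pd F p (r+1) x' b) := by
      have hnb : ∀ᶠ x' in 𝓝 a, (x', b) ∈ U :=
        (continuousAt_id.prodMk continuousAt_const).preimage_mem_nhds (hU.mem_nhds h)
      filter_upwards [hnb] with x' hx'
      exact ih r hx'
    rw [hEq.deriv_eq, ← pd_one_zero, ← pd_succ_left]

/-- Chain rule along the curve `x ↦ (x, y x)`. -/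
lemma hasDerivAt_comp2 {U : Set (ℝ × ℝ)} (hU : IsOpen U) {F : ℝ → ℝ → ℝ}
    (hF : ContDiffOn ℝ (⊤:ℕ∞) (uncurry F) U) {y : ℝ → ℝ} {y' a : ℝ}
    (h : (a, y a) ∈ U) (hy : HasDerivAt y y' a) :
    HasDerivAt (fun x => F x (y x))
      (pd F 1 0 a (y a) + pd F 0 1 a (y a) * y') a := by
  have hd : HasFDerivAt (uncurry F) (fderiv ℝ (uncurry F) (a, y a)) (a, y a) :=
    (hF.contDiffAt (hU.mem_nhds h)).differentiableAt (by simp) |>.hasFDerivAt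
  have hc : HasDerivAt (fun x : ℝ => (x, y x)) ((1:ℝ), y') a :=
    (hasDerivAt_id a).prodMk hy
  have := hd.comp_hasDerivAt a hc
  refine this.congr_deriv ?_
  symm
  rw [pd_one_zero_eq hF hU h, pd_zero_one_eq hF hU h]
  have hv : ((1:ℝ), y') = ((1:ℝ),(0:ℝ)) + y' • ((0:ℝ),(1:ℝ)) := by
    simp [Prod.ext_iff]
  rw [hv, map_add, map_smul]
  simp [mul_comm]

/-- Main derivative formula for composed partial derivatives. -/
lemma hasDerivAt_pd_comp {U : Set (ℝ × ℝ)} (hU : IsOpen U) {F : ℝ → ℝ → ℝ}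
    (hF : ContDiffOn ℝ (⊤:ℕ∞) (uncurry F) U) (p r : ℕ) {y : ℝ → ℝ} {y' a : ℝ}
    (h : (a, y a) ∈ U) (hy : HasDerivAt y y' a) :
    HasDerivAt (fun x => pd F p r x (y x))
      (pd F (p+1) r a (y a) + pd F p (r+1) a (y a) * y') a := by
  have hH : ContDiffOn ℝ (⊤:ℕ∞) (uncurry (pd F p r)) U := smooth_pd hU r p F hF
  have := hasDerivAt_comp2 hU hH h hy
  rwa [← pd_succ_left, pd_swap hU hF p r h] at this

theorem statement1 (f : ℝ → ℝ → ℝ) (x₀ y₀ : ℝ) (y : ℝ → ℝ)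
    (hf : ∀ᶠ p in 𝓝 (x₀, y₀), ContDiffAt ℝ (⊤ : ℕ∞) (Function.uncurry f) p)
    (hf0 : f x₀ y₀ = 0) (hfy : pd f 0 1 x₀ y₀ ≠ 0)
    (hy : ∀ᶠ x in 𝓝 x₀, ContDiffAt ℝ (⊤ : ℕ∞) y x)
    (hy0 : y x₀ = y₀)
    (himp : ∀ᶠ x in 𝓝 x₀, f x (y x) = 0)
    (l : ℕ) (hl : 1 ≤ l)
    (g : ℝ → ℝ → ℝ) (hg : ContDiff ℝ (⊤ : ℕ∞) (Function.uncurry g)) :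
    ∀ᶠ x in 𝓝 x₀,
      (pd f 0 1 x (y x)) ^ 2 * deriv (fun x' => Delta f l g x' (y x')) x =
        pd f 0 1 x (y x) * Delta f (l + 1) g x (y x) +
        (l : ℝ) * Delta f 1 (pd f 0 1) x (y x) * Delta f l g x (y x) -
        (l : ℝ) * Delta f 2 f x (y x) * Delta f (l - 1) (pd g 0 1) x (y x) := by
  -- extract an open set on which f is smooth
  obtain ⟨t, ht, hsub⟩ := hf.exists_mem
  obtain ⟨U, hUt, hUo, hmemU⟩ := mem_nhds_iff.1 ht
  have hFU : ContDiffOn ℝ (⊤:ℕ∞) (uncurry f) U :=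
    fun z hz => (hsub z (hUt hz)).contDiffWithinAt
  have hgU : ContDiffOn ℝ (⊤:ℕ∞) (uncurry g) (Set.univ) := hg.contDiffOn
  have hyc : ContinuousAt y x₀ := (hy.self_of_nhds).continuousAt
  have hcurve₀ : ContinuousAt (fun x => (x, y x)) x₀ := continuousAt_id.prodMk hyc
  have hmem' : ((x₀ : ℝ), y x₀) ∈ U := by rw [hy0]; exact hmemU
  have EvU : ∀ᶠ x in 𝓝 x₀, (x, y x) ∈ U := hcurve₀.preimage_mem_nhds (hUo.mem_nhds hmem')
  have EvQ : ∀ᶠ x in 𝓝 x₀, pd f 0 1 x (y x) ≠ 0 := by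
    have hcQ : ContinuousAt (fun x => pd f 0 1 x (y x)) x₀ := by
      have h2 : ContinuousAt (uncurry (pd f 0 1)) (x₀, y x₀) :=
        (smooth_pd hUo 1 0 f hFU).continuousOn.continuousAt (hUo.mem_nhds hmem')
      have h3 : ContinuousAt (uncurry (pd f 0 1) ∘ (fun x => (x, y x))) x₀ :=
        ContinuousAt.comp (f := fun x => (x, y x)) h2 hcurve₀
      exact h3
    apply hcQ.eventually_ne
    rw [hy0]; exact hfy
  have EvDiff : ∀ᶠ x in 𝓝 x₀, DifferentiableAt ℝ y x :=
    hy.mono fun x h => h.differentiableAt (by simp)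
  have EvImp : ∀ᶠ x in 𝓝 x₀, ∀ᶠ x' in 𝓝 x, f x' (y x') = 0 := himp.eventually_nhds
  filter_upwards [EvU, EvQ, EvDiff, EvImp] with x hxU hQ0 hyd himp'
  set b := y x with hbdef
  set y' := deriv y x with hy'def
  have hyD : HasDerivAt y y' x := hyd.hasDerivAt
  set P := pd f 1 0 x b with hPdef
  set Q := pd f 0 1 x b with hQdef
  set F20 := pd f 2 0 x b with hF20def
  set F11 := pd f 1 1 x b with hF11def
  set F02 := pd f 0 2 x b with hF02def
  set A := F20 * Q - F11 * P with hAdef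
  set B := F11 * Q - F02 * P with hBdef
  set Gp : ℕ → ℕ → ℝ := fun p r => pd g p r x b with hGpdef
  -- implicit differentiation:  Q * y' = -P
  have hqy : Q * y' = -P := by
    have hch : HasDerivAt (fun x' => f x' (y x')) (P + Q * y') x :=
      hasDerivAt_comp2 hUo hFU hxU hyD
    have h0 : deriv (fun x' => f x' (y x')) x = 0 := by
      have hEq : (fun x' => f x' (y x')) =ᶠ[𝓝 x] (fun _ => (0:ℝ)) := himp'
      rw [hEq.deriv_eq, deriv_const]
    have := hch.deriv
    rw [h0] at this
    linarith
  have hy'eq : y' = -P / Q := by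
    field_simp
    linarith [hqy]
  -- derivatives of composed pd's
  have hP' : HasDerivAt (fun x' => pd f 1 0 x' (y x')) (F20 + F11 * y') x := by
    have := hasDerivAt_pd_comp hUo hFU 1 0 hxU hyD
    norm_num at this
    exact this
  have hQ' : HasDerivAt (fun x' => pd f 0 1 x' (y x')) (F11 + F02 * y') x := by
    have := hasDerivAt_pd_comp hUo hFU 0 1 hxU hyD
    norm_num at this
    exact this
  have hG : ∀ j : ℕ, HasDerivAt (fun x' => pd g (l-j) j x' (y x'))
      (Gp (l-j+1) j + Gp (l-j) (j+1) * y') x := fun j =>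
    hasDerivAt_pd_comp isOpen_univ hgU (l-j) j (Set.mem_univ _) hyD
  -- the derivative of the composed Delta
  have hd : deriv (fun x' => Delta f l g x' (y x')) x =
      ∑ j ∈ Finset.range (l+1),
        ((((-1:ℝ)^j * (l.choose j : ℝ) * (Gp (l-j+1) j + Gp (l-j) (j+1) * y')) *
            (P ^ j) +
          ((-1:ℝ)^j * (l.choose j : ℝ) * Gp (l-j) j) *
            ((j:ℝ) * P ^ (j-1) * (F20 + F11 * y'))) * Q ^ (l-j) +
        ((-1:ℝ)^j * (l.choose j : ℝ) * Gp (l-j) j * P ^ j) *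
          (((l-j : ℕ):ℝ) * Q ^ (l-j-1) * (F11 + F02 * y'))) := by
    apply HasDerivAt.deriv
    simp only [Delta]
    refine HasDerivAt.fun_sum (fun j hj => ?_)
    have h₁ := (((hG j).const_mul ((-1:ℝ)^j * (l.choose j : ℝ))).mul
      (hP'.pow j)).mul (hQ'.pow (l-j))
    exact h₁
  rw [hd]
  set T1 : ℕ → ℝ := fun k => (-1:ℝ)^k * (l.choose k : ℝ) * Gp (l+1-k) k * P^k * Q^(l+2-k)
    with hT1def
  set T1' : ℕ → ℝ := fun k => -((-1:ℝ)^k * (l.choose k : ℝ) * Gp (l-k) (k+1) * P^(k+1) * Q^(l+1-k))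
    with hT1'def
  set T2 : ℕ → ℝ := fun k => (k:ℝ) * ((-1:ℝ)^k * (l.choose k : ℝ)) * Gp (l-k) k * A * P^(k-1) * Q^(l+1-k)
    with hT2def
  set T3 : ℕ → ℝ := fun k => ((l-k : ℕ):ℝ) * ((-1:ℝ)^k * (l.choose k : ℝ)) * Gp (l-k) k * B * P^k * Q^(l-k)
    with hT3def
  set E : ℕ → ℝ := fun k => (-1:ℝ)^k * ((l-1).choose k : ℝ) * Gp (l-1-k) (k+1) * P^k * Q^(l-1-k)
    with hEdef
  have hstep : Q^2 * (∑ j ∈ Finset.range (l+1),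
      ((((-1:ℝ)^j * (l.choose j : ℝ) * (Gp (l-j+1) j + Gp (l-j) (j+1) * y')) *
            (P ^ j) +
          ((-1:ℝ)^j * (l.choose j : ℝ) * Gp (l-j) j) *
            ((j:ℝ) * P ^ (j-1) * (F20 + F11 * y'))) * Q ^ (l-j) +
        ((-1:ℝ)^j * (l.choose j : ℝ) * Gp (l-j) j * P ^ j) *
          (((l-j : ℕ):ℝ) * Q ^ (l-j-1) * (F11 + F02 * y')))) =
      ∑ j ∈ Finset.range (l+1), (T1 j + T1' j + T2 j + T3 j) := by
    rw [Finset.mul_sum]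
    refine Finset.sum_congr rfl (fun j hj => ?_)
    have hjl : j ≤ l := Finset.mem_range_succ_iff.mp hj
    simp only [hT1def, hT1'def, hT2def, hT3def]
    have e1 : l + 1 - j = l - j + 1 := by omega
    have e2 : l + 2 - j = l - j + 2 := by omega
    rw [e1, e2, hy'eq]
    rcases Nat.eq_zero_or_pos (l - j) with hm | hm
    · rw [hm]
      norm_num
      field_simp
      ring
    · obtain ⟨m, hm2⟩ : ∃ m, l - j = m + 1 := ⟨l - j - 1, by omega⟩
      rw [hm2]
      norm_num
      field_simp
      ring
  rw [hstep]
  have hsplit : ∑ j ∈ Finset.range (l+1), (T1 j + T1' j + T2 j + T3 j) =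
      ((∑ j ∈ Finset.range (l+1), T1 j) + (∑ j ∈ Finset.range (l+1), T1' j)) +
      (∑ j ∈ Finset.range (l+1), T2 j) + (∑ j ∈ Finset.range (l+1), T3 j) := by
    rw [Finset.sum_add_distrib, Finset.sum_add_distrib, Finset.sum_add_distrib]
  rw [hsplit]
  -- value of Delta (l+1)
  have hDl1 : Q * Delta f (l+1) g x b = ∑ k ∈ Finset.range (l+1+1),
      (-1:ℝ)^k * ((l+1).choose k : ℝ) * Gp (l+1-k) k * P^k * Q^(l+2-k) := by
    simp only [Delta]
    rw [Finset.mul_sum]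
    refine Finset.sum_congr rfl (fun k hk => ?_)
    have hkl : k ≤ l + 1 := Finset.mem_range_succ_iff.mp hk
    have e1 : l + 2 - k = (l + 1 - k) + 1 := by omega
    rw [e1, pow_succ]
    ring
  -- value of Delta (l-1) (g_y)
  have hDE : Delta f (l-1) (pd g 0 1) x b = ∑ k ∈ Finset.range l, E k := by
    simp only [Delta]
    have hr : l - 1 + 1 = l := by omega
    rw [hr]
    refine Finset.sum_congr rfl (fun k hk => ?_)
    rw [show pd (pd g 0 1) (l-1-k) k = pd g (l-1-k) (k+1) from
      (pd_succ_right_inner g (l-1-k) k).symm]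
  -- key identity 1
  have hkey1 : (∑ j ∈ Finset.range (l+1), T1 j) + (∑ j ∈ Finset.range (l+1), T1' j) =
      Q * Delta f (l+1) g x b := by
    rw [hDl1]
    rw [Finset.sum_range_succ' (fun k => (-1:ℝ)^k * ((l+1).choose k : ℝ) *
      Gp (l+1-k) k * P^k * Q^(l+2-k)) (l+1)]
    have a1 := Finset.sum_range_succ' T1 (l+1)
    have a2 := Finset.sum_range_succ T1 (l+1)
    have hT1top : T1 (l+1) = 0 := by
      rw [hT1def]
      simp [Nat.choose_succ_self]
    have hF0 : (-1:ℝ)^0 * ((l+1).choose 0 : ℝ) * Gp (l+1-0) 0 * P^0 * Q^(l+2-0) = T1 0 := by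
      rw [hT1def]
      norm_num
    have hFsucc : ∀ j ∈ Finset.range (l+1),
        (-1:ℝ)^(j+1) * ((l+1).choose (j+1) : ℝ) * Gp (l+1-(j+1)) (j+1) * P^(j+1) *
          Q^(l+2-(j+1)) = T1 (j+1) + T1' j := by
      intro j hj
      simp only [hT1def, hT1'def]
      have e1 : l + 1 - (j+1) = l - j := by omega
      have e2 : l + 2 - (j+1) = l + 1 - j := by omega
      rw [e1, e2]
      have hch : ((l+1).choose (j+1) : ℝ) = (l.choose j : ℝ) + (l.choose (j+1) : ℝ) := by
        exact_mod_cast congrArg (Nat.cast (R := ℝ)) (Nat.choose_succ_succ l j)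
      rw [hch]
      ring
    rw [Finset.sum_congr rfl hFsucc]
    rw [Finset.sum_add_distrib]
    have : ∑ j ∈ Finset.range (l+1), T1 (j+1) = ∑ j ∈ Finset.range (l+1), T1 j - T1 0 := by
      linarith
    rw [this, hF0]
    ring
  -- cast identity for choose
  have hcastR : ∀ k, k < l → ((k:ℝ)+1) * (l.choose (k+1) : ℝ) =
      (l:ℝ) * (((l-1).choose k : ℝ)) := by
    intro k hk
    have hnat : (k+1) * l.choose (k+1) = l * ((l-1).choose k) := by
      have h1 := Nat.add_one_mul_choose_eq (l-1) k
      have h2 : l - 1 + 1 = l := by omega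
      simp only [Nat.succ_eq_add_one, h2] at h1
      rw [mul_comm (k+1) (l.choose (k+1))]
      exact h1.symm
    exact_mod_cast congrArg (Nat.cast (R := ℝ)) hnat
  -- key identity 2
  have hkey2 : (∑ j ∈ Finset.range (l+1), T2 j) =
      -((l:ℝ) * A * Q) * ∑ k ∈ Finset.range l, E k := by
    rw [Finset.sum_range_succ' T2 l]
    have hT20 : T2 0 = 0 := by simp [hT2def]
    rw [hT20, add_zero, Finset.mul_sum]
    refine Finset.sum_congr rfl (fun k hk => ?_)
    have hkl : k < l := Finset.mem_range.mp hk
    simp only [hT2def, hEdef]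
    have e1 : l - (k+1) = l - 1 - k := by omega
    have e2 : (k+1) - 1 = k := by omega
    have e3 : l + 1 - (k+1) = (l - 1 - k) + 1 := by omega
    rw [e1, e2, e3]
    have hc := hcastR k hkl
    push_cast at hc ⊢
    linear_combination ((-1:ℝ)^(k+1) * Gp (l-1-k) (k+1) * A * P^k * Q^(l-1-k) * Q) * hc
  -- key identity 3
  have hkey3 : (∑ j ∈ Finset.range (l+1), T3 j) =
      (l:ℝ) * B * Delta f l g x b + ((l:ℝ) * B * P) * ∑ k ∈ Finset.range l, E k := by
    have hDl : Delta f l g x b = ∑ j ∈ Finset.range (l+1),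
        ((-1:ℝ)^j * (l.choose j : ℝ) * Gp (l-j) j * P^j * Q^(l-j)) := by
      simp only [Delta]
      rfl
    have hsp : ∀ j ∈ Finset.range (l+1), T3 j =
        (l:ℝ) * B * ((-1:ℝ)^j * (l.choose j : ℝ) * Gp (l-j) j * P^j * Q^(l-j)) +
        (-((j:ℝ) * (l.choose j : ℝ) * (-1:ℝ)^j * Gp (l-j) j * B * P^j * Q^(l-j))) := by
      intro j hj
      have hjl : j ≤ l := Finset.mem_range_succ_iff.mp hj
      simp only [hT3def]
      rw [Nat.cast_sub hjl]
      ring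
    rw [Finset.sum_congr rfl hsp, Finset.sum_add_distrib, ← Finset.mul_sum, ← hDl]
    congr 1
    rw [Finset.sum_range_succ' (fun j => -((j:ℝ) * (l.choose j : ℝ) * (-1:ℝ)^j *
      Gp (l-j) j * B * P^j * Q^(l-j))) l]
    simp only [Nat.cast_zero, zero_mul, neg_zero, add_zero]
    rw [Finset.mul_sum]
    refine Finset.sum_congr rfl (fun k hk => ?_)
    have hkl : k < l := Finset.mem_range.mp hk
    simp only [hEdef]
    have e1 : l - (k+1) = l - 1 - k := by omega
    rw [e1]
    have hc := hcastR k hkl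
    push_cast at hc ⊢
    linear_combination ((-1:ℝ)^k * Gp (l-1-k) (k+1) * B * P^(k+1) * Q^(l-1-k)) * hc
  rw [hkey1, hkey2, hkey3]
  -- values of Delta 1 (f_y) and Delta 2 f
  have hDB : Delta f 1 (pd f 0 1) x b = B := by
    have h1 : pd (pd f 0 1) 1 0 = pd f 1 1 := (pd_succ_left f 0 1).symm
    have h2 : pd (pd f 0 1) 0 1 = pd f 0 2 := pd_zero_swap f 1
    simp [Delta, Finset.sum_range_succ, h1, h2, hBdef]
    ring
  have hD2 : Delta f 2 f x b = A * Q - B * P := by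
    simp [Delta, Finset.sum_range_succ, hAdef, hBdef]
    ring
  rw [hDB, hD2, hDE]
  ring
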